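/- arXiv:2412.12455 — 2 statements merged into one kernel-verified Lean document; each statement's English description precedes it below -/
import Mathlib

section
/- Let p be an odd prime, q = p^e a power of p, and n a positive odd integer not divisible by p. Let γ be an integer, τ the least positive integer with γ·q^τ ≡ γ (mod n), and assume q^τ ≡ 3 (mod 4); set v = v_2(q^τ + 1). Then for every nonzero integer δ with δ ≡ γ (mod n) and every N ≥ 0, the size of the q-cyclotomic coset modulo 2^N n containing δ equals τ if N ≤ v_2(δ) + 1, and equals τ·2^{max(1, N − v_2(δ) − v)} if N > v_2(δ) + 1. -/
/-!
By the Chinese remainder theorem, `δ q^j ≡ δ (mod 2^N n)` splits into a condition mod `n`,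
which holds iff `τ ∣ j` because `τ` is the minimal period of `γ mod n` under multiplication
by `q`, and the condition `2^N ∣ δ (q^j - 1)`. Writing `j = τ k` and `Q = q^τ ≡ 3 (mod 4)`,
lifting the exponent gives `v₂(Q^k - 1) = 1` for odd `k` and `v₂(Q + 1) + v₂(k)` for even `k`.
So the second condition is automatic when `N ≤ v₂(δ) + 1`, and otherwise says exactly
`2^max(1, N - v₂(δ) - v₂(Q + 1)) ∣ k`.
-/

theorem Function.isPeriodicPt_iff_dvd_of_isLeast {α : Type*} {f : α → α} {x : α} {τ : ℕ}
    (hτ : IsLeast {t | 0 < t ∧ IsPeriodicPt f t x} τ) (j : ℕ) :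
    IsPeriodicPt f j x ↔ τ ∣ j := by
  have hmin : minimalPeriod f x = τ :=
    le_antisymm (hτ.1.2.minimalPeriod_le hτ.1.1)
      (hτ.2 ⟨hτ.1.2.minimalPeriod_pos hτ.1.1, isPeriodicPt_minimalPeriod f x⟩)
  rw [isPeriodicPt_iff_minimalPeriod_dvd, hmin]

theorem Int.mul_pow_modEq_self_iff_dvd {n : ℕ} {a q : ℤ} {τ : ℕ}
    (hτ : IsLeast {t : ℕ | 0 < t ∧ a * q ^ t ≡ a [ZMOD n]} τ) (j : ℕ) :
    a * q ^ j ≡ a [ZMOD n] ↔ τ ∣ j := by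
  have hper (t : ℕ) :
      a * q ^ t ≡ a [ZMOD n] ↔ Function.IsPeriodicPt (· * (q : ZMod n)) t (a : ZMod n) := by
    rw [Function.IsPeriodicPt, Function.IsFixedPt, mul_right_iterate_apply,
      ← ZMod.intCast_eq_intCast_iff]
    push_cast
    rfl
  simp only [hper] at hτ ⊢
  exact Function.isPeriodicPt_iff_dvd_of_isLeast hτ j

theorem Nat.pow_mod_four_of_odd {Q k : ℕ} (hQ : Q % 4 = 3) (hk : Odd k) : Q ^ k % 4 = 3 := by
  obtain ⟨m, rfl⟩ := hk
  rw [pow_succ, pow_mul, Nat.mul_mod, Nat.pow_mod, Nat.pow_mod Q 2, hQ]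
  norm_num

theorem padicValNat_two_pow_sub_one_of_odd {Q k : ℕ} (hQ : Q % 4 = 3) (hk : Odd k) :
    padicValNat 2 (Q ^ k - 1) = 1 := by
  have hmod := Nat.pow_mod_four_of_odd hQ hk
  have hne : Q ^ k - 1 ≠ 0 := by omega
  have h2 : 2 ^ 1 ∣ Q ^ k - 1 := by omega
  have h4 : ¬ 2 ^ 2 ∣ Q ^ k - 1 := by omega
  rw [padicValNat_dvd_iff_le hne] at h2 h4
  omega

theorem padicValNat_two_pow_sub_one_of_even {Q k : ℕ} (hQ : Q % 4 = 3) (hk₀ : k ≠ 0)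
    (hk : Even k) :
    padicValNat 2 (Q ^ k - 1) = padicValNat 2 (Q + 1) + padicValNat 2 k := by
  have hQ1 := padicValNat_two_pow_sub_one_of_odd hQ odd_one
  rw [pow_one] at hQ1
  have := padicValNat.pow_two_sub_one (x := Q) (by omega) (by omega) hk₀ hk
  omega

theorem two_le_padicValNat_two_add_one {Q : ℕ} (hQ : Q % 4 = 3) : 2 ≤ padicValNat 2 (Q + 1) :=
  (padicValNat_dvd_iff_le (by omega)).mp (by omega)

theorem two_pow_dvd_mul_pow_sub_one_iff {Q : ℕ} (hQ : Q % 4 = 3) {δ : ℤ} (hδ : δ ≠ 0)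
    (N k : ℕ) :
    (2 : ℤ) ^ N ∣ δ * ((Q : ℤ) ^ k - 1) ↔
      N ≤ padicValInt 2 δ + 1 ∨
        2 ^ max 1 (N - (padicValInt 2 δ + padicValInt 2 ((Q : ℤ) + 1))) ∣ k := by
  rcases eq_or_ne k 0 with rfl | hk₀
  · simp
  have hcast : (Q : ℤ) ^ k - 1 = ((Q ^ k - 1 : ℕ) : ℤ) := by
    have : 1 ≤ Q ^ k := Nat.one_le_pow _ _ (by omega)
    push_cast [this]
    ring
  have hne : Q ^ k - 1 ≠ 0 := by
    have := Nat.one_lt_pow hk₀ (show 1 < Q by omega)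
    omega
  have hv := two_le_padicValNat_two_add_one hQ
  rw [hcast, ← Nat.cast_ofNat, padicValInt_dvd_iff, padicValInt.mul hδ (by exact_mod_cast hne),
    padicValInt.of_nat, ← Nat.cast_add_one, padicValInt.of_nat, padicValNat_dvd_iff_le hk₀]
  simp only [mul_eq_zero, hδ, Nat.cast_eq_zero, hne, or_self, false_or]
  rcases Nat.even_or_odd k with hk | hk
  · have h1 : 1 ≤ padicValNat 2 k := (padicValNat_dvd_iff_le hk₀).mp (even_iff_two_dvd.mp hk)
    rw [padicValNat_two_pow_sub_one_of_even hQ hk₀ hk]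
    omega
  · rw [padicValNat_two_pow_sub_one_of_odd hQ hk,
      padicValNat.eq_zero_of_not_dvd hk.not_two_dvd_nat]
    omega

theorem mul_pow_modEq_self_two_pow_mul_iff {q n : ℕ} (hn : Odd n) {γ δ : ℤ} {τ : ℕ}
    (hτ : IsLeast {t : ℕ | 0 < t ∧ γ * (q : ℤ) ^ t ≡ γ [ZMOD n]} τ)
    (hq4 : (q : ℤ) ^ τ ≡ 3 [ZMOD 4]) (hδ : δ ≠ 0) (hδγ : δ ≡ γ [ZMOD n]) (N j : ℕ) :
    δ * (q : ℤ) ^ j ≡ δ [ZMOD ((2 ^ N * n : ℕ) : ℤ)] ↔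
      τ ∣ j ∧ (N ≤ padicValInt 2 δ + 1 ∨
        τ * 2 ^ max 1 (N - (padicValInt 2 δ + padicValInt 2 ((q : ℤ) ^ τ + 1))) ∣ j) := by
  have hcop : ((2 : ℤ) ^ N).natAbs.Coprime (n : ℤ).natAbs := by
    simpa [Int.natAbs_pow] using (Nat.coprime_two_left.mpr hn).pow_left N
  have hmodn : δ * (q : ℤ) ^ j ≡ δ [ZMOD n] ↔ γ * (q : ℤ) ^ j ≡ γ [ZMOD n] :=
    ⟨fun h => ((hδγ.mul_right _).symm.trans h).trans hδγ,
      fun h => ((hδγ.mul_right _).trans h).trans hδγ.symm⟩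
  rw [Nat.cast_mul, Nat.cast_pow, Nat.cast_ofNat, ← Int.modEq_and_modEq_iff_modEq_mul hcop,
    hmodn, Int.mul_pow_modEq_self_iff_dvd hτ, and_comm]
  refine and_congr_right ?_
  rintro ⟨k, rfl⟩
  rw [Nat.mul_dvd_mul_iff_left hτ.1.1, Int.modEq_comm, Int.modEq_iff_dvd, pow_mul,
    show δ * ((q : ℤ) ^ τ) ^ k - δ = δ * (((q ^ τ : ℕ) : ℤ) ^ k - 1) by push_cast; ring,
    two_pow_dvd_mul_pow_sub_one_iff (by exact_mod_cast hq4) hδ]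
  push_cast
  rfl

theorem Nat.isLeast_pos_of_iff_dvd {P : ℕ → Prop} {m : ℕ} (hm : 0 < m) (hP : ∀ j, P j ↔ m ∣ j) :
    IsLeast {j | 0 < j ∧ P j} m :=
  ⟨⟨hm, (hP m).mpr dvd_rfl⟩, fun _ ⟨hj, hPj⟩ => Nat.le_of_dvd hj ((hP _).mp hPj)⟩

theorem stmt_17_general (q n : ℕ) (hnodd : Odd n)
    (γ : ℤ) (τ : ℕ)
    (hτ : IsLeast {t : ℕ | 0 < t ∧ γ * (q : ℤ) ^ t ≡ γ [ZMOD (n : ℤ)]} τ)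
    (hq4 : (q : ℤ) ^ τ ≡ 3 [ZMOD 4]) :
    ∀ δ : ℤ, δ ≠ 0 → δ ≡ γ [ZMOD (n : ℤ)] → ∀ N : ℕ,
      (N ≤ padicValInt 2 δ + 1 →
        IsLeast {j : ℕ | 0 < j ∧ δ * (q : ℤ) ^ j ≡ δ [ZMOD ((2 ^ N * n : ℕ) : ℤ)]} τ) ∧
      (padicValInt 2 δ + 1 < N →
        IsLeast {j : ℕ | 0 < j ∧ δ * (q : ℤ) ^ j ≡ δ [ZMOD ((2 ^ N * n : ℕ) : ℤ)]}
          (τ * 2 ^ max 1 (N - (padicValInt 2 δ + padicValInt 2 ((q : ℤ) ^ τ + 1))))) := by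
  intro δ hδ hδγ N
  have key := mul_pow_modEq_self_two_pow_mul_iff hnodd hτ hq4 hδ hδγ N
  refine ⟨fun hN => ?_, fun hN => ?_⟩
  · exact Nat.isLeast_pos_of_iff_dvd hτ.1.1 fun j => (key j).trans (and_iff_left (.inl hN))
  · refine Nat.isLeast_pos_of_iff_dvd (Nat.mul_pos hτ.1.1 (pow_pos two_pos _)) fun j => ?_
    exact (key j).trans
      ⟨fun h => h.2.resolve_left hN.not_ge, fun h => ⟨dvd_of_mul_right_dvd h, .inr h⟩⟩

theorem stmt_17 (p e q n : ℕ) (hp : p.Prime) (hp2 : p ≠ 2) (he : 0 < e) (hq : q = p ^ e)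
    (hn : 0 < n) (hnodd : Odd n) (hnp : ¬ p ∣ n)
    (γ : ℤ) (τ : ℕ)
    (hτ : IsLeast {t : ℕ | 0 < t ∧ γ * (q : ℤ) ^ t ≡ γ [ZMOD (n : ℤ)]} τ)
    (hq4 : (q : ℤ) ^ τ ≡ 3 [ZMOD 4]) :
    ∀ δ : ℤ, δ ≠ 0 → δ ≡ γ [ZMOD (n : ℤ)] → ∀ N : ℕ,
      (N ≤ padicValInt 2 δ + 1 →
        IsLeast {j : ℕ | 0 < j ∧ δ * (q : ℤ) ^ j ≡ δ [ZMOD ((2 ^ N * n : ℕ) : ℤ)]} τ) ∧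
      (padicValInt 2 δ + 1 < N →
        IsLeast {j : ℕ | 0 < j ∧ δ * (q : ℤ) ^ j ≡ δ [ZMOD ((2 ^ N * n : ℕ) : ℤ)]}
          (τ * 2 ^ max 1 (N - (padicValInt 2 δ + padicValInt 2 ((q : ℤ) ^ τ + 1))))) :=
  stmt_17_general q n hnodd γ τ hτ hq4
end

section
/- Let p be a prime, q = p^e a power of p, ℓ an odd prime different from p, and n a positive integer divisible by neither p nor ℓ. Let γ be an integer, τ the least positive integer with γ·q^τ ≡ γ (mod n), and assume ℓ ∣ q^τ − 1 with v_ℓ(q^τ − 1) = 1. Let (a_k)_{k≥0}, a_k ∈ {0,…,ℓ−1}, be the unique sequence such that ℓ^{N+1} ∣ γ + n·Σ_{k=0}^{N} a_k ℓ^k for all N ≥ 0. Then for every f ≥ 1, the q-cyclotomic cosets modulo ℓ^f n whose projection to ℤ/nℤ equals c_{n/q}(γ) are exactly the following f·(ℓ−1) + 1 pairwise distinct cosets: the cosets containing γ + n·(Σ_{k=0}^{m−1} a_k ℓ^k + b·ℓ^m) for each 0 ≤ m ≤ f−1 and each b ∈ {0,…,ℓ−1} with b ≠ a_m, of size ℓ^{f−m−1}·τ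 respectively, together with the coset containing γ + n·Σ_{k=0}^{f} a_k ℓ^k, of size τ. -/
/-- The `q`-cyclotomic coset modulo `m` containing (the class of) the integer `γ`,
as a subset of `ZMod m`. -/
def cycCoset (q m : ℕ) (γ : ℤ) : Set (ZMod m) :=
  {x | ∃ j : ℕ, x = (γ : ZMod m) * (q : ZMod m) ^ j}

/-- The partial sum `Σ_{k=0}^{m-1} a_k ℓ^k` of the digit sequence `a`. -/
def digitSum (ℓ : ℕ) (a : ℕ → ℕ) (m : ℕ) : ℤ :=
  ∑ k ∈ Finset.range m, (a k : ℤ) * (ℓ : ℤ) ^ k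

/-!
Every coset lying over `c_{n/q}(γ)` meets the fibre `γ + nℤ`, and two points `δ, δ'` of this fibre
lie in the same coset modulo `ℓ^f n` iff `δ' ≡ δ Q^k (mod ℓ^f)` for some `k`, where `Q = q^τ`.
Since `v_ℓ(Q - 1) = 1`, lifting the exponent gives `v_ℓ(Q^k - 1) = 1 + v_ℓ(k)`; hence the powers of
`Q` exhaust the units `≡ 1 (mod ℓ)` modulo every power of `ℓ`. So if `v_ℓ(δ) = m < f`, the coset of
`δ` meets the fibre exactly in the class of `δ` modulo `ℓ^{m+1}`, and its size is `ℓ^{f-m-1} τ`;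
all `δ` with `ℓ^f ∣ δ` form a single coset of size `τ`. The digits `a_k` pick one representative of
each class: `γ + n (Σ_{k<m} a_k ℓ^k + b ℓ^m)` has valuation exactly `m` when `b ≠ a_m`.
-/

section CycCoset

variable {q M : ℕ}

lemma exists_modEq_of_cycCoset_eq {δ δ' : ℤ} (h : cycCoset q M δ = cycCoset q M δ') :
    ∃ j : ℕ, δ' ≡ δ * q ^ j [ZMOD M] := by
  have hmem : (δ' : ZMod M) ∈ cycCoset q M δ := h ▸ ⟨0, by simp⟩
  obtain ⟨j, hj⟩ := hmem
  exact ⟨j, (ZMod.intCast_eq_intCast_iff _ _ _).1 (by push_cast; exact hj)⟩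

lemma cycCoset_eq_of_modEq [NeZero M] (hq : q.Coprime M) {δ δ' : ℤ} {j : ℕ}
    (h : δ' ≡ δ * q ^ j [ZMOD M]) : cycCoset q M δ = cycCoset q M δ' := by
  have hj : (δ' : ZMod M) = δ * q ^ j := by
    simpa using (ZMod.intCast_eq_intCast_iff _ _ _).2 h
  have hs : 0 < orderOf (q : ZMod M) := by
    rw [← ZMod.coe_unitOfCoprime q hq, orderOf_units]
    exact orderOf_pos _
  have hqs : (q : ZMod M) ^ (orderOf (q : ZMod M) * j) = 1 := by
    rw [pow_mul, pow_orderOf_eq_one, one_pow]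
  ext x
  constructor
  · rintro ⟨i, rfl⟩
    refine ⟨orderOf (q : ZMod M) * j - j + i, ?_⟩
    rw [hj, mul_assoc, ← pow_add, ← add_assoc, Nat.add_sub_cancel' (Nat.le_mul_of_pos_left j hs),
      pow_add, hqs, one_mul]
  · rintro ⟨i, rfl⟩
    exact ⟨j + i, by rw [hj, mul_assoc, ← pow_add]⟩

lemma image_castHom_cycCoset {n : ℕ} (h : n ∣ M) (δ : ℤ) :
    ZMod.castHom h (ZMod n) '' cycCoset q M δ = cycCoset q n δ := by
  ext x
  simp only [Set.mem_image, cycCoset]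
  constructor
  · rintro ⟨y, ⟨j, rfl⟩, rfl⟩
    exact ⟨j, by rw [map_mul, map_pow, map_intCast, map_natCast]⟩
  · rintro ⟨j, rfl⟩
    exact ⟨_, ⟨j, rfl⟩, by rw [map_mul, map_pow, map_intCast, map_natCast]⟩

end CycCoset

lemma modEq_mul_pow_iff_dvd {q n τ : ℕ} {γ : ℤ}
    (hτ : IsLeast {t : ℕ | 0 < t ∧ γ * (q : ℤ) ^ t ≡ γ [ZMOD n]} τ) (j : ℕ) :
    γ * (q : ℤ) ^ j ≡ γ [ZMOD n] ↔ τ ∣ j := by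
  have hper : ∀ t, Function.IsPeriodicPt (· * (q : ZMod n)) t (γ : ZMod n) ↔
      γ * (q : ℤ) ^ t ≡ γ [ZMOD n] := by
    intro t
    rw [Function.IsPeriodicPt, Function.IsFixedPt, mul_right_iterate_apply,
      ← ZMod.intCast_eq_intCast_iff]
    push_cast
    rfl
  have hmin : Function.minimalPeriod (· * (q : ZMod n)) (γ : ZMod n) = τ := by
    have hτper := (hper τ).2 hτ.1.2
    refine le_antisymm (hτper.minimalPeriod_le hτ.1.1) (hτ.2 ⟨?_, (hper _).1 ?_⟩)
    · exact Function.minimalPeriod_pos_of_mem_periodicPts ⟨τ, hτ.1.1, hτper⟩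
    · exact Function.isPeriodicPt_minimalPeriod _ _
  rw [← hper, Function.isPeriodicPt_iff_minimalPeriod_dvd, hmin]

lemma Prime.not_dvd_of_dvd_sub_one {R : Type*} [CommRing R] {p x : R} (hp : Prime p)
    (h : p ∣ x - 1) : ¬ p ∣ x :=
  fun hx ↦ hp.not_dvd_one (by simpa using dvd_sub hx h)

lemma pow_succ_dvd_pow_sub_one_iff {ℓ : ℕ} (hℓ : ℓ.Prime) (hℓ2 : ℓ ≠ 2) {x : ℤ}
    (h1 : (ℓ : ℤ) ∣ x - 1) (h2 : ¬ (ℓ : ℤ) ^ 2 ∣ x - 1) (s k : ℕ) :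
    (ℓ : ℤ) ^ (s + 1) ∣ x ^ k - 1 ↔ ℓ ^ s ∣ k := by
  have hmult : emultiplicity (ℓ : ℤ) (x - 1) = 1 :=
    emultiplicity_eq_coe.2 ⟨by simpa using h1, by simpa using h2⟩
  rw [pow_dvd_iff_le_emultiplicity, pow_dvd_iff_le_emultiplicity, ← one_pow k (M := ℤ),
    Int.emultiplicity_pow_sub_pow hℓ (hℓ.odd_of_ne_two hℓ2) (by simpa using h1)
      ((Nat.prime_iff_prime_int.mp hℓ).not_dvd_of_dvd_sub_one h1), hmult,
    Nat.cast_succ, add_comm (1 : ℕ∞)]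
  exact ENat.add_le_add_iff_right ENat.one_ne_top

lemma exists_mul_pow_modEq {ℓ : ℕ} (hℓ : ℓ.Prime) (hℓ2 : ℓ ≠ 2) {x : ℤ}
    (h1 : (ℓ : ℤ) ∣ x - 1) (h2 : ¬ (ℓ : ℤ) ^ 2 ∣ x - 1) {c c' : ℤ} (hc : ¬ (ℓ : ℤ) ∣ c)
    (hcc' : (ℓ : ℤ) ∣ c' - c) (k : ℕ) : ∃ j, c * x ^ j ≡ c' [ZMOD (ℓ : ℤ) ^ k] := by
  have hℓ' := Nat.prime_iff_prime_int.mp hℓ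
  obtain _ | s := k
  · exact ⟨0, by simp [Int.modEq_one]⟩
  -- The `ℓ^s` classes `c * x ^ j` (`j < ℓ^s`) are distinct modulo `ℓ^(s+1)` and all lie in the
  -- class of `c` modulo `ℓ`, which splits into only `ℓ^s` classes modulo `ℓ^(s+1)`.
  let r : ℤ → ZMod (ℓ ^ (s + 1)) := Int.cast
  have hr : ∀ y y', r y = r y' ↔ y ≡ y' [ZMOD (ℓ : ℤ) ^ (s + 1)] := fun y y' ↦ by
    simp only [r, ZMod.intCast_eq_intCast_iff, Nat.cast_pow]
  let residues := (Finset.range (ℓ ^ s)).image fun t : ℕ ↦ r (c + ℓ * t)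
  let orbit := (Finset.range (ℓ ^ s)).image fun j ↦ r (c * x ^ j)
  have mem_residues : ∀ y, (ℓ : ℤ) ∣ y - c → r y ∈ residues := by
    rintro y ⟨t, ht⟩
    have hN : (0 : ℤ) < (ℓ ^ s : ℕ) := by exact_mod_cast pow_pos hℓ.pos s
    refine Finset.mem_image.2 ⟨(t % (ℓ ^ s : ℕ)).toNat, ?_, (hr _ _).2 ?_⟩
    · rw [Finset.mem_range, ← Nat.cast_lt (α := ℤ), Int.toNat_of_nonneg (Int.emod_nonneg _ hN.ne')]
      exact Int.emod_lt_of_pos _ hN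
    · rw [Int.toNat_of_nonneg (Int.emod_nonneg _ hN.ne'), pow_succ',
        show y = c + ℓ * t by linear_combination ht]
      push_cast
      exact ((Int.mod_modEq t _).mul_left' (c := (ℓ : ℤ))).add_left c
  have hinj : Set.InjOn (fun j ↦ r (c * x ^ j)) (Finset.range (ℓ ^ s)) := by
    intro i hi j hj hij
    wlog hle : i ≤ j generalizing i j
    · exact (this hj hi hij.symm (le_of_not_ge hle)).symm
    obtain ⟨d, rfl⟩ := Nat.exists_eq_add_of_le hle
    have hdvd : (ℓ : ℤ) ^ (s + 1) ∣ (c * x ^ i) * (x ^ d - 1) := by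
      simpa [mul_sub, pow_add, mul_assoc] using ((hr _ _).1 hij).dvd
    have hcop : IsCoprime ((ℓ : ℤ) ^ (s + 1)) (c * x ^ i) :=
      ((hℓ'.coprime_iff_not_dvd.2 hc).mul_right
        ((hℓ'.coprime_iff_not_dvd.2 (hℓ'.not_dvd_of_dvd_sub_one h1)).pow_right)).pow_left
    have hd := (pow_succ_dvd_pow_sub_one_iff hℓ hℓ2 h1 h2 s d).1 (hcop.dvd_of_dvd_mul_left hdvd)
    simp only [Finset.coe_range, Set.mem_Iio] at hj
    have : d = 0 := Nat.eq_zero_of_dvd_of_lt hd (by omega)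
    omega
  have horbit : orbit ⊆ residues := by
    intro y hy
    obtain ⟨j, -, rfl⟩ := Finset.mem_image.1 hy
    exact mem_residues _
      (by simpa [mul_sub] using (h1.trans (sub_one_dvd_pow_sub_one x j)).mul_left c)
  have heq : orbit = residues := Finset.eq_of_subset_of_card_le horbit (by
    rw [Finset.card_image_of_injOn hinj, Finset.card_range]
    exact Finset.card_image_le.trans (Finset.card_range _).le)
  obtain ⟨j, -, hj⟩ := Finset.mem_image.1 (heq ▸ mem_residues c' hcc')
  exact ⟨j, (hr _ _).1 hj⟩

lemma exists_pow_dvd_not_pow_succ_dvd {α : Type*} [Monoid α] {p x : α} {f : ℕ}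
    (h : ¬ p ^ f ∣ x) : ∃ m < f, p ^ m ∣ x ∧ ¬ p ^ (m + 1) ∣ x := by
  induction f with
  | zero => simp at h
  | succ f ih =>
    by_cases hf : p ^ f ∣ x
    · exact ⟨f, f.lt_succ_self, hf, h⟩
    · obtain ⟨m, hm, hmx⟩ := ih hf
      exact ⟨m, by omega, hmx⟩

lemma isLeast_of_forall_iff_dvd {P : ℕ → Prop} {d : ℕ} (hd : 0 < d) (h : ∀ j, P j ↔ d ∣ j) :
    IsLeast {j | 0 < j ∧ P j} d :=
  ⟨⟨hd, (h d).2 dvd_rfl⟩, fun _ hj ↦ Nat.le_of_dvd hj.1 ((h _).1 hj.2)⟩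

section Digits

variable {ℓ n : ℕ} {γ : ℤ} {a : ℕ → ℕ}

lemma digitSum_succ (ℓ : ℕ) (a : ℕ → ℕ) (m : ℕ) :
    digitSum ℓ a (m + 1) = digitSum ℓ a m + a m * (ℓ : ℤ) ^ m :=
  Finset.sum_range_succ _ m

lemma pow_dvd_add_mul_digitSum
    (hdig : ∀ N : ℕ, (ℓ : ℤ) ^ (N + 1) ∣ γ + n * digitSum ℓ a (N + 1)) (m : ℕ) :
    (ℓ : ℤ) ^ m ∣ γ + n * digitSum ℓ a m := by
  obtain _ | m := m
  · simp
  · exact hdig m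

lemma eq_of_pow_succ_dvd_mul_sub (hℓ : ℓ.Prime) (hnℓ : ¬ ℓ ∣ n) {b c m : ℕ} (hb : b < ℓ)
    (hc : c < ℓ) (h : (ℓ : ℤ) ^ (m + 1) ∣ n * ((b : ℤ) - c) * ℓ ^ m) : b = c := by
  rw [pow_succ, mul_comm ((ℓ : ℤ) ^ m),
    mul_dvd_mul_iff_right (pow_ne_zero m (by exact_mod_cast hℓ.ne_zero))] at h
  rcases (Nat.prime_iff_prime_int.mp hℓ).dvd_mul.1 h with h | h
  · exact absurd (Int.natCast_dvd_natCast.1 h) hnℓ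
  · have := Int.eq_zero_of_abs_lt_dvd h (by rw [abs_lt]; constructor <;> omega)
    omega

lemma pow_dvd_and_not_pow_succ_dvd_add_mul_digitSum (hℓ : ℓ.Prime) (hnℓ : ¬ ℓ ∣ n)
    (ha : ∀ k, a k < ℓ) (hdig : ∀ N : ℕ, (ℓ : ℤ) ^ (N + 1) ∣ γ + n * digitSum ℓ a (N + 1))
    {m b : ℕ} (hb : b < ℓ) (hba : b ≠ a m) :
    (ℓ : ℤ) ^ m ∣ γ + n * (digitSum ℓ a m + b * (ℓ : ℤ) ^ m) ∧
      ¬ (ℓ : ℤ) ^ (m + 1) ∣ γ + n * (digitSum ℓ a m + b * (ℓ : ℤ) ^ m) := by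
  have hsplit : γ + n * (digitSum ℓ a m + b * (ℓ : ℤ) ^ m) =
      (γ + n * digitSum ℓ a (m + 1)) + n * ((b : ℤ) - a m) * ℓ ^ m := by
    rw [digitSum_succ]; ring
  rw [hsplit]
  refine ⟨dvd_add ((pow_dvd_pow _ m.le_succ).trans (hdig m)) (dvd_mul_left _ _), fun h ↦ ?_⟩
  exact hba (eq_of_pow_succ_dvd_mul_sub hℓ hnℓ hb (ha m) ((dvd_add_right (hdig m)).1 h))

lemma exists_digit_pow_succ_dvd_sub (hℓ : ℓ.Prime) (hnℓ : ¬ ℓ ∣ n)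
    (hdig : ∀ N : ℕ, (ℓ : ℤ) ^ (N + 1) ∣ γ + n * digitSum ℓ a (N + 1))
    {δ : ℤ} (hδ : δ ≡ γ [ZMOD n]) {m : ℕ} (hm : (ℓ : ℤ) ^ m ∣ δ) :
    ∃ b < ℓ, (ℓ : ℤ) ^ (m + 1) ∣ δ - (γ + n * (digitSum ℓ a m + b * (ℓ : ℤ) ^ m)) := by
  obtain ⟨y, hy⟩ := hδ.symm.dvd
  have hcop : IsCoprime ((ℓ : ℤ) ^ m) n :=
    (Nat.isCoprime_iff_coprime.2 ((hℓ.coprime_iff_not_dvd).2 hnℓ)).pow_left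
  have hdvd := dvd_sub hm (pow_dvd_add_mul_digitSum hdig m)
  rw [show δ - (γ + n * digitSum ℓ a m) = n * (y - digitSum ℓ a m) by
    linear_combination hy] at hdvd
  obtain ⟨z, hz⟩ := hcop.dvd_of_dvd_mul_left hdvd
  have hℓ0 : (0 : ℤ) < ℓ := by exact_mod_cast hℓ.pos
  have hzℓ := Int.emod_lt_of_pos z hℓ0
  refine ⟨(z % ℓ).toNat, by omega, ?_⟩
  rw [Int.toNat_of_nonneg (Int.emod_nonneg _ hℓ0.ne'),
    show δ - (γ + n * (digitSum ℓ a m + z % ℓ * ℓ ^ m)) = n * ℓ ^ m * (z - z % ℓ) by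
      linear_combination hy + n * hz, pow_succ]
  exact mul_dvd_mul (dvd_mul_left _ _) (Int.mod_modEq z ℓ).dvd

end Digits

section Orbits

variable {q ℓ n τ f : ℕ} {γ : ℤ}

lemma modEq_pow_mul_iff (hℓ : ℓ.Prime) (hnℓ : ¬ ℓ ∣ n) {x y : ℤ} :
    x ≡ y [ZMOD ((ℓ ^ f * n : ℕ) : ℤ)] ↔ x ≡ y [ZMOD (ℓ : ℤ) ^ f] ∧ x ≡ y [ZMOD n] := by
  have hcop : ((ℓ : ℤ) ^ f).natAbs.Coprime (n : ℤ).natAbs := by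
    simpa [Int.natAbs_pow] using Nat.Coprime.pow_left f ((hℓ.coprime_iff_not_dvd).2 hnℓ)
  rw [Int.modEq_and_modEq_iff_modEq_mul hcop]
  push_cast
  rfl

lemma dvd_of_modEq_mul_pow (hτ : IsLeast {t : ℕ | 0 < t ∧ γ * (q : ℤ) ^ t ≡ γ [ZMOD n]} τ)
    {δ₁ δ₂ : ℤ} (hδ₁ : δ₁ ≡ γ [ZMOD n]) (hδ₂ : δ₂ ≡ γ [ZMOD n]) {j : ℕ}
    (h : δ₂ ≡ δ₁ * q ^ j [ZMOD n]) : τ ∣ j :=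
  (modEq_mul_pow_iff_dvd hτ j).1 ((hδ₁.symm.mul_right _).trans (h.symm.trans hδ₂))

lemma mul_pow_modEq_self_iff (hℓ : ℓ.Prime) (hnℓ : ¬ ℓ ∣ n)
    (hτ : IsLeast {t : ℕ | 0 < t ∧ γ * (q : ℤ) ^ t ≡ γ [ZMOD n]} τ)
    {δ : ℤ} (hδ : δ ≡ γ [ZMOD n]) (j : ℕ) :
    δ * q ^ j ≡ δ [ZMOD ((ℓ ^ f * n : ℕ) : ℤ)] ↔ τ ∣ j ∧ δ * q ^ j ≡ δ [ZMOD (ℓ : ℤ) ^ f] := by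
  rw [modEq_pow_mul_iff hℓ hnℓ, and_comm, ← modEq_mul_pow_iff_dvd hτ]
  exact and_congr_left' ⟨fun h ↦ (hδ.symm.mul_right _).trans (h.trans hδ),
    fun h ↦ (hδ.mul_right _).trans (h.trans hδ.symm)⟩

lemma isLeast_period_of_not_pow_succ_dvd (hℓ : ℓ.Prime) (hℓ2 : ℓ ≠ 2) (hnℓ : ¬ ℓ ∣ n)
    (hτ : IsLeast {t : ℕ | 0 < t ∧ γ * (q : ℤ) ^ t ≡ γ [ZMOD n]} τ)
    (h1 : (ℓ : ℤ) ∣ (q : ℤ) ^ τ - 1) (h2 : ¬ (ℓ : ℤ) ^ 2 ∣ (q : ℤ) ^ τ - 1)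
    {δ : ℤ} (hδ : δ ≡ γ [ZMOD n]) {m : ℕ} (hmf : m < f) (hm : (ℓ : ℤ) ^ m ∣ δ)
    (hm1 : ¬ (ℓ : ℤ) ^ (m + 1) ∣ δ) :
    IsLeast {j : ℕ | 0 < j ∧ δ * (q : ℤ) ^ j ≡ δ [ZMOD ((ℓ ^ f * n : ℕ) : ℤ)]}
      (ℓ ^ (f - m - 1) * τ) := by
  obtain ⟨c, rfl⟩ := hm
  obtain ⟨d, rfl⟩ := Nat.exists_eq_add_of_lt hmf
  rw [show m + d + 1 - m - 1 = d by omega]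
  have hℓ' := Nat.prime_iff_prime_int.mp hℓ
  have hc : ¬ (ℓ : ℤ) ∣ c := fun h ↦ hm1 (pow_succ (ℓ : ℤ) m ▸ mul_dvd_mul_left _ h)
  have hfix : ∀ k, (ℓ : ℤ) ^ m * c * q ^ (τ * k) ≡ ℓ ^ m * c [ZMOD (ℓ : ℤ) ^ (m + d + 1)] ↔
      ℓ ^ d ∣ k := fun k ↦ by
    rw [Int.modEq_comm, Int.modEq_iff_dvd,
      show (ℓ : ℤ) ^ m * c * q ^ (τ * k) - ℓ ^ m * c = ℓ ^ m * (c * ((q ^ τ) ^ k - 1)) by ring,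
      add_assoc, pow_add, mul_dvd_mul_iff_left (pow_ne_zero m hℓ'.ne_zero),
      ← pow_succ_dvd_pow_sub_one_iff hℓ hℓ2 h1 h2]
    exact ⟨(hℓ'.coprime_iff_not_dvd.2 hc).pow_left.dvd_of_dvd_mul_left, fun h ↦ h.mul_left c⟩
  refine isLeast_of_forall_iff_dvd (Nat.mul_pos (pow_pos hℓ.pos d) hτ.1.1) fun j ↦ ?_
  rw [mul_pow_modEq_self_iff hℓ hnℓ hτ hδ]
  constructor
  · rintro ⟨⟨k, rfl⟩, hk⟩
    rw [mul_comm τ k]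
    exact mul_dvd_mul_right ((hfix k).1 hk) τ
  · rintro ⟨k, rfl⟩
    rw [show ℓ ^ d * τ * k = τ * (ℓ ^ d * k) by ring]
    exact ⟨dvd_mul_right _ _, (hfix _).2 (dvd_mul_right _ _)⟩

lemma isLeast_period_of_pow_dvd (hℓ : ℓ.Prime) (hnℓ : ¬ ℓ ∣ n)
    (hτ : IsLeast {t : ℕ | 0 < t ∧ γ * (q : ℤ) ^ t ≡ γ [ZMOD n]} τ)
    {δ : ℤ} (hδ : δ ≡ γ [ZMOD n]) (hδf : (ℓ : ℤ) ^ f ∣ δ) :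
    IsLeast {j : ℕ | 0 < j ∧ δ * (q : ℤ) ^ j ≡ δ [ZMOD ((ℓ ^ f * n : ℕ) : ℤ)]} τ := by
  refine isLeast_of_forall_iff_dvd hτ.1.1 fun j ↦ ?_
  rw [mul_pow_modEq_self_iff hℓ hnℓ hτ hδ, and_iff_left_iff_imp]
  exact fun _ ↦ (Int.modEq_zero_iff_dvd.2 (hδf.mul_right _)).trans
    (Int.modEq_zero_iff_dvd.2 hδf).symm

lemma cycCoset_eq_of_pow_succ_dvd_sub [NeZero (ℓ ^ f * n)] (hqM : q.Coprime (ℓ ^ f * n))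
    (hℓ : ℓ.Prime) (hℓ2 : ℓ ≠ 2) (hnℓ : ¬ ℓ ∣ n)
    (hτ : IsLeast {t : ℕ | 0 < t ∧ γ * (q : ℤ) ^ t ≡ γ [ZMOD n]} τ)
    (h1 : (ℓ : ℤ) ∣ (q : ℤ) ^ τ - 1) (h2 : ¬ (ℓ : ℤ) ^ 2 ∣ (q : ℤ) ^ τ - 1)
    {δ₁ δ₂ : ℤ} (hδ₁ : δ₁ ≡ γ [ZMOD n]) (hδ₂ : δ₂ ≡ γ [ZMOD n]) {m : ℕ} (hmf : m < f)
    (hm : (ℓ : ℤ) ^ m ∣ δ₁) (hm1 : ¬ (ℓ : ℤ) ^ (m + 1) ∣ δ₁) (h : (ℓ : ℤ) ^ (m + 1) ∣ δ₂ - δ₁) :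
    cycCoset q (ℓ ^ f * n) δ₁ = cycCoset q (ℓ ^ f * n) δ₂ := by
  obtain ⟨c, rfl⟩ := hm
  have hc : ¬ (ℓ : ℤ) ∣ c := fun h ↦ hm1 (pow_succ (ℓ : ℤ) m ▸ mul_dvd_mul_left _ h)
  obtain ⟨t, ht⟩ := h
  obtain ⟨k, hk⟩ := exists_mul_pow_modEq hℓ hℓ2 h1 h2 hc (c' := c + ℓ * t) (by simp) (f - m)
  refine cycCoset_eq_of_modEq hqM (j := τ * k) ((modEq_pow_mul_iff hℓ hnℓ).2 ⟨?_, ?_⟩)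
  · have := hk.mul_left' (c := (ℓ : ℤ) ^ m)
    rw [← pow_add, Nat.add_sub_cancel' hmf.le] at this
    rw [pow_mul, show δ₂ = ℓ ^ m * (c + ℓ * t) by linear_combination ht]
    exact this.symm.trans (by rw [mul_assoc])
  · exact hδ₂.trans (((modEq_mul_pow_iff_dvd hτ _).2 (dvd_mul_right τ k)).symm.trans
      (hδ₁.symm.mul_right _))

lemma pow_succ_dvd_sub_of_cycCoset_eq
    (hτ : IsLeast {t : ℕ | 0 < t ∧ γ * (q : ℤ) ^ t ≡ γ [ZMOD n]} τ)
    (h1 : (ℓ : ℤ) ∣ (q : ℤ) ^ τ - 1) {δ₁ δ₂ : ℤ} (hδ₁ : δ₁ ≡ γ [ZMOD n])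
    (hδ₂ : δ₂ ≡ γ [ZMOD n]) (h : cycCoset q (ℓ ^ f * n) δ₁ = cycCoset q (ℓ ^ f * n) δ₂)
    {s : ℕ} (hsf : s < f) (hs : (ℓ : ℤ) ^ s ∣ δ₁) : (ℓ : ℤ) ^ (s + 1) ∣ δ₂ - δ₁ := by
  obtain ⟨j, hj⟩ := exists_modEq_of_cycCoset_eq h
  replace hj : δ₂ ≡ δ₁ * q ^ j [ZMOD (ℓ : ℤ) ^ f * n] := by exact_mod_cast hj
  obtain ⟨k, rfl⟩ := dvd_of_modEq_mul_pow hτ hδ₁ hδ₂ (hj.of_mul_left _)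
  have hq : (ℓ : ℤ) ∣ (q : ℤ) ^ (τ * k) - 1 := by
    rw [pow_mul]
    exact h1.trans (sub_one_dvd_pow_sub_one _ _)
  rw [show δ₂ - δ₁ = δ₁ * ((q : ℤ) ^ (τ * k) - 1) - (δ₁ * q ^ (τ * k) - δ₂) by ring, pow_succ]
  exact dvd_sub (mul_dvd_mul hs hq) ((pow_dvd_pow _ hsf).trans (hj.of_mul_right _).dvd)

lemma cycCoset_ne_of_pow_succ_dvd
    (hτ : IsLeast {t : ℕ | 0 < t ∧ γ * (q : ℤ) ^ t ≡ γ [ZMOD n]} τ)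
    (h1 : (ℓ : ℤ) ∣ (q : ℤ) ^ τ - 1) {δ₁ δ₂ : ℤ} (hδ₁ : δ₁ ≡ γ [ZMOD n])
    (hδ₂ : δ₂ ≡ γ [ZMOD n]) {m : ℕ} (hmf : m < f) (hm1 : ¬ (ℓ : ℤ) ^ (m + 1) ∣ δ₁)
    (h : (ℓ : ℤ) ^ (m + 1) ∣ δ₂) : cycCoset q (ℓ ^ f * n) δ₁ ≠ cycCoset q (ℓ ^ f * n) δ₂ :=
  fun heq ↦ hm1 (by simpa using dvd_add (pow_succ_dvd_sub_of_cycCoset_eq hτ h1 hδ₂ hδ₁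
    heq.symm hmf ((pow_dvd_pow _ m.le_succ).trans h)) h)

end Orbits

section Classification

variable {q ℓ n τ f : ℕ} {γ : ℤ} {a : ℕ → ℕ}

lemma cycCoset_eq_digit_coset_of_modEq [NeZero (ℓ ^ f * n)] (hqM : q.Coprime (ℓ ^ f * n))
    (hℓ : ℓ.Prime) (hℓ2 : ℓ ≠ 2) (hnℓ : ¬ ℓ ∣ n)
    (hτ : IsLeast {t : ℕ | 0 < t ∧ γ * (q : ℤ) ^ t ≡ γ [ZMOD n]} τ)
    (h1 : (ℓ : ℤ) ∣ (q : ℤ) ^ τ - 1) (h2 : ¬ (ℓ : ℤ) ^ 2 ∣ (q : ℤ) ^ τ - 1)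
    (hdig : ∀ N : ℕ, (ℓ : ℤ) ^ (N + 1) ∣ γ + n * digitSum ℓ a (N + 1))
    {δ : ℤ} (hδ : δ ≡ γ [ZMOD n]) :
    (∃ m < f, ∃ b < ℓ, b ≠ a m ∧
        cycCoset q (ℓ ^ f * n) δ =
          cycCoset q (ℓ ^ f * n) (γ + n * (digitSum ℓ a m + (b : ℤ) * (ℓ : ℤ) ^ m))) ∨
      cycCoset q (ℓ ^ f * n) δ = cycCoset q (ℓ ^ f * n) (γ + n * digitSum ℓ a (f + 1)) := by
  by_cases hδf : (ℓ : ℤ) ^ f ∣ δ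
  · have hM : γ + n * digitSum ℓ a (f + 1) ≡ δ [ZMOD ((ℓ ^ f * n : ℕ) : ℤ)] :=
      (modEq_pow_mul_iff hℓ hnℓ).2
        ⟨(Int.modEq_zero_iff_dvd.2 ((pow_dvd_pow _ f.le_succ).trans (hdig f))).trans
          (Int.modEq_zero_iff_dvd.2 hδf).symm, Int.modEq_add_fac_self.trans hδ.symm⟩
    exact .inr (cycCoset_eq_of_modEq hqM (j := 0) (by rwa [pow_zero, mul_one]))
  obtain ⟨m, hmf, hm, hm1⟩ := exists_pow_dvd_not_pow_succ_dvd hδf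
  obtain ⟨b, hb, hbδ⟩ := exists_digit_pow_succ_dvd_sub hℓ hnℓ hdig hδ hm
  refine .inl ⟨m, hmf, b, hb, ?_, cycCoset_eq_of_pow_succ_dvd_sub hqM hℓ hℓ2 hnℓ hτ h1 h2 hδ
    Int.modEq_add_fac_self hmf hm hm1 (dvd_sub_comm.1 hbδ)⟩
  rintro rfl
  rw [← digitSum_succ] at hbδ
  exact hm1 (by simpa using dvd_add hbδ (hdig m))

lemma digit_cycCoset_ne_of_ne (hℓ : ℓ.Prime) (hnℓ : ¬ ℓ ∣ n)
    (hτ : IsLeast {t : ℕ | 0 < t ∧ γ * (q : ℤ) ^ t ≡ γ [ZMOD n]} τ)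
    (h1 : (ℓ : ℤ) ∣ (q : ℤ) ^ τ - 1) (ha : ∀ k, a k < ℓ)
    (hdig : ∀ N : ℕ, (ℓ : ℤ) ^ (N + 1) ∣ γ + n * digitSum ℓ a (N + 1))
    {m₁ m₂ b₁ b₂ : ℕ} (hm₁ : m₁ < f) (hm₂ : m₂ < f) (hb₁ : b₁ < ℓ) (hb₂ : b₂ < ℓ)
    (hba₁ : b₁ ≠ a m₁) (hba₂ : b₂ ≠ a m₂) (hne : (m₁, b₁) ≠ (m₂, b₂)) :
    cycCoset q (ℓ ^ f * n) (γ + n * (digitSum ℓ a m₁ + (b₁ : ℤ) * (ℓ : ℤ) ^ m₁)) ≠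
      cycCoset q (ℓ ^ f * n) (γ + n * (digitSum ℓ a m₂ + (b₂ : ℤ) * (ℓ : ℤ) ^ m₂)) := by
  wlog hle : m₁ ≤ m₂ generalizing m₁ m₂ b₁ b₂
  · exact (this hm₂ hm₁ hb₂ hb₁ hba₂ hba₁ hne.symm (le_of_not_ge hle)).symm
  obtain ⟨hx₁, hx₁'⟩ := pow_dvd_and_not_pow_succ_dvd_add_mul_digitSum hℓ hnℓ ha hdig hb₁ hba₁
  obtain ⟨hx₂, -⟩ := pow_dvd_and_not_pow_succ_dvd_add_mul_digitSum hℓ hnℓ ha hdig hb₂ hba₂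
  rcases hle.lt_or_eq with hlt | rfl
  · exact cycCoset_ne_of_pow_succ_dvd hτ h1 Int.modEq_add_fac_self Int.modEq_add_fac_self hm₁
      hx₁' ((pow_dvd_pow _ hlt).trans hx₂)
  intro heq
  have hdvd := pow_succ_dvd_sub_of_cycCoset_eq hτ h1 Int.modEq_add_fac_self
    Int.modEq_add_fac_self heq hm₁ hx₁
  rw [show γ + n * (digitSum ℓ a m₁ + b₂ * ℓ ^ m₁) - (γ + n * (digitSum ℓ a m₁ + b₁ * ℓ ^ m₁)) =
    n * ((b₂ : ℤ) - b₁) * ℓ ^ m₁ by ring] at hdvd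
  exact hne (by rw [eq_of_pow_succ_dvd_mul_sub hℓ hnℓ hb₂ hb₁ hdvd])

end Classification

theorem stmt_18_general (p e q ℓ n : ℕ) (hp : p.Prime) (hq : q = p ^ e)
    (hℓ : ℓ.Prime) (hℓ2 : ℓ ≠ 2) (hℓp : ℓ ≠ p)
    (hn : 0 < n) (hnp : ¬ p ∣ n) (hnℓ : ¬ ℓ ∣ n)
    (γ : ℤ) (τ : ℕ)
    (hτ : IsLeast {t : ℕ | 0 < t ∧ γ * (q : ℤ) ^ t ≡ γ [ZMOD (n : ℤ)]} τ)
    (hdvd : (ℓ : ℤ) ∣ (q : ℤ) ^ τ - 1)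
    (hv : padicValInt ℓ ((q : ℤ) ^ τ - 1) = 1)
    (a : ℕ → ℕ) (ha : ∀ k, a k < ℓ)
    (hdig : ∀ N : ℕ, (ℓ : ℤ) ^ (N + 1) ∣ γ + n * digitSum ℓ a (N + 1)) :
    ∀ f : ℕ, 1 ≤ f →
      -- (1) the cosets modulo ℓ^f n projecting onto c_{n/q}(γ) are exactly the listed ones
      (∀ δ : ℤ,
        ((ZMod.castHom (dvd_mul_left n (ℓ ^ f)) (ZMod n)) '' (cycCoset q (ℓ ^ f * n) δ) =
            cycCoset q n γ) ↔
          ((∃ m < f, ∃ b < ℓ, b ≠ a m ∧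
              cycCoset q (ℓ ^ f * n) δ =
                cycCoset q (ℓ ^ f * n) (γ + n * (digitSum ℓ a m + (b : ℤ) * (ℓ : ℤ) ^ m))) ∨
            cycCoset q (ℓ ^ f * n) δ =
              cycCoset q (ℓ ^ f * n) (γ + n * digitSum ℓ a (f + 1)))) ∧
      -- (2) they are pairwise distinct
      (∀ m₁, m₁ < f → ∀ b₁, b₁ < ℓ → b₁ ≠ a m₁ → ∀ m₂, m₂ < f → ∀ b₂, b₂ < ℓ → b₂ ≠ a m₂ →
        (m₁, b₁) ≠ (m₂, b₂) →
        cycCoset q (ℓ ^ f * n) (γ + n * (digitSum ℓ a m₁ + (b₁ : ℤ) * (ℓ : ℤ) ^ m₁)) ≠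
          cycCoset q (ℓ ^ f * n) (γ + n * (digitSum ℓ a m₂ + (b₂ : ℤ) * (ℓ : ℤ) ^ m₂))) ∧
      (∀ m, m < f → ∀ b, b < ℓ → b ≠ a m →
        cycCoset q (ℓ ^ f * n) (γ + n * (digitSum ℓ a m + (b : ℤ) * (ℓ : ℤ) ^ m)) ≠
          cycCoset q (ℓ ^ f * n) (γ + n * digitSum ℓ a (f + 1))) ∧
      -- (3) their sizes
      (∀ m, m < f → ∀ b, b < ℓ → b ≠ a m →
        IsLeast {j : ℕ | 0 < j ∧
            (γ + n * (digitSum ℓ a m + (b : ℤ) * (ℓ : ℤ) ^ m)) * (q : ℤ) ^ j ≡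
              γ + n * (digitSum ℓ a m + (b : ℤ) * (ℓ : ℤ) ^ m) [ZMOD ((ℓ ^ f * n : ℕ) : ℤ)]}
          (ℓ ^ (f - m - 1) * τ)) ∧
      IsLeast {j : ℕ | 0 < j ∧
          (γ + n * digitSum ℓ a (f + 1)) * (q : ℤ) ^ j ≡
            γ + n * digitSum ℓ a (f + 1) [ZMOD ((ℓ ^ f * n : ℕ) : ℤ)]} τ := by
  intro f _
  have : Fact ℓ.Prime := ⟨hℓ⟩
  have : NeZero n := ⟨hn.ne'⟩
  have : NeZero (ℓ ^ f * n) := ⟨Nat.mul_ne_zero (pow_ne_zero f hℓ.ne_zero) hn.ne'⟩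
  have hqn : q.Coprime n := hq ▸ Nat.Coprime.pow_left e ((hp.coprime_iff_not_dvd).2 hnp)
  have hqM : q.Coprime (ℓ ^ f * n) :=
    Nat.Coprime.mul_right (hq ▸ Nat.Coprime.pow e f ((Nat.coprime_primes hp hℓ).2 hℓp.symm)) hqn
  have hsq : ¬ (ℓ : ℤ) ^ 2 ∣ (q : ℤ) ^ τ - 1 := by
    rw [padicValInt_dvd_iff]
    rintro (h0 | h2)
    · simp [h0] at hv
    · omega
  have hval {m b : ℕ} (hb : b < ℓ) (hba : b ≠ a m) :=
    pow_dvd_and_not_pow_succ_dvd_add_mul_digitSum hℓ hnℓ ha hdig hb hba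
  have hxf : (ℓ : ℤ) ^ f ∣ γ + n * digitSum ℓ a (f + 1) := (pow_dvd_pow _ f.le_succ).trans (hdig f)
  refine ⟨fun δ ↦ ⟨fun h ↦ ?_, fun h ↦ ?_⟩,
    fun m₁ hm₁ b₁ hb₁ hba₁ m₂ hm₂ b₂ hb₂ hba₂ hne ↦
      digit_cycCoset_ne_of_ne hℓ hnℓ hτ hdvd ha hdig hm₁ hm₂ hb₁ hb₂ hba₁ hba₂ hne,
    fun m hm b hb hba ↦ cycCoset_ne_of_pow_succ_dvd hτ hdvd Int.modEq_add_fac_self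
      Int.modEq_add_fac_self hm (hval hb hba).2 ((pow_dvd_pow _ hm).trans hxf),
    fun m hm b hb hba ↦ isLeast_period_of_not_pow_succ_dvd hℓ hℓ2 hnℓ hτ hdvd hsq
      Int.modEq_add_fac_self hm (hval hb hba).1 (hval hb hba).2,
    isLeast_period_of_pow_dvd hℓ hnℓ hτ Int.modEq_add_fac_self hxf⟩
  · rw [image_castHom_cycCoset] at h
    obtain ⟨i, hi⟩ := exists_modEq_of_cycCoset_eq h
    rw [cycCoset_eq_of_modEq hqM (j := i) (δ' := δ * q ^ i) Int.ModEq.rfl]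
    exact cycCoset_eq_digit_coset_of_modEq hqM hℓ hℓ2 hnℓ hτ hdvd hsq hdig hi.symm
  · have hγ : ∀ y : ℤ, cycCoset q n (γ + n * y) = cycCoset q n γ := fun _ ↦
      cycCoset_eq_of_modEq hqn (j := 0)
        (by rw [pow_zero, mul_one]; exact Int.modEq_add_fac_self.symm)
    rw [image_castHom_cycCoset]
    obtain ⟨m, -, b, -, -, h⟩ | h := h <;>
      rw [← image_castHom_cycCoset (dvd_mul_left n (ℓ ^ f)), h, image_castHom_cycCoset, hγ]

theorem stmt_18 (p e q ℓ n : ℕ) (hp : p.Prime) (he : 0 < e) (hq : q = p ^ e)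
    (hℓ : ℓ.Prime) (hℓ2 : ℓ ≠ 2) (hℓp : ℓ ≠ p)
    (hn : 0 < n) (hnp : ¬ p ∣ n) (hnℓ : ¬ ℓ ∣ n)
    (γ : ℤ) (τ : ℕ)
    (hτ : IsLeast {t : ℕ | 0 < t ∧ γ * (q : ℤ) ^ t ≡ γ [ZMOD (n : ℤ)]} τ)
    (hdvd : (ℓ : ℤ) ∣ (q : ℤ) ^ τ - 1)
    (hv : padicValInt ℓ ((q : ℤ) ^ τ - 1) = 1)
    (a : ℕ → ℕ) (ha : ∀ k, a k < ℓ)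
    (hdig : ∀ N : ℕ, (ℓ : ℤ) ^ (N + 1) ∣ γ + n * digitSum ℓ a (N + 1)) :
    ∀ f : ℕ, 1 ≤ f →
      -- (1) the cosets modulo ℓ^f n projecting onto c_{n/q}(γ) are exactly the listed ones
      (∀ δ : ℤ,
        ((ZMod.castHom (dvd_mul_left n (ℓ ^ f)) (ZMod n)) '' (cycCoset q (ℓ ^ f * n) δ) =
            cycCoset q n γ) ↔
          ((∃ m < f, ∃ b < ℓ, b ≠ a m ∧
              cycCoset q (ℓ ^ f * n) δ =
                cycCoset q (ℓ ^ f * n) (γ + n * (digitSum ℓ a m + (b : ℤ) * (ℓ : ℤ) ^ m))) ∨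
            cycCoset q (ℓ ^ f * n) δ =
              cycCoset q (ℓ ^ f * n) (γ + n * digitSum ℓ a (f + 1)))) ∧
      -- (2) they are pairwise distinct
      (∀ m₁, m₁ < f → ∀ b₁, b₁ < ℓ → b₁ ≠ a m₁ → ∀ m₂, m₂ < f → ∀ b₂, b₂ < ℓ → b₂ ≠ a m₂ →
        (m₁, b₁) ≠ (m₂, b₂) →
        cycCoset q (ℓ ^ f * n) (γ + n * (digitSum ℓ a m₁ + (b₁ : ℤ) * (ℓ : ℤ) ^ m₁)) ≠
          cycCoset q (ℓ ^ f * n) (γ + n * (digitSum ℓ a m₂ + (b₂ : ℤ) * (ℓ : ℤ) ^ m₂))) ∧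
      (∀ m, m < f → ∀ b, b < ℓ → b ≠ a m →
        cycCoset q (ℓ ^ f * n) (γ + n * (digitSum ℓ a m + (b : ℤ) * (ℓ : ℤ) ^ m)) ≠
          cycCoset q (ℓ ^ f * n) (γ + n * digitSum ℓ a (f + 1))) ∧
      -- (3) their sizes
      (∀ m, m < f → ∀ b, b < ℓ → b ≠ a m →
        IsLeast {j : ℕ | 0 < j ∧
            (γ + n * (digitSum ℓ a m + (b : ℤ) * (ℓ : ℤ) ^ m)) * (q : ℤ) ^ j ≡
              γ + n * (digitSum ℓ a m + (b : ℤ) * (ℓ : ℤ) ^ m) [ZMOD ((ℓ ^ f * n : ℕ) : ℤ)]}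
          (ℓ ^ (f - m - 1) * τ)) ∧
      IsLeast {j : ℕ | 0 < j ∧
          (γ + n * digitSum ℓ a (f + 1)) * (q : ℤ) ^ j ≡
            γ + n * digitSum ℓ a (f + 1) [ZMOD ((ℓ ^ f * n : ℕ) : ℤ)]} τ :=
  stmt_18_general p e q ℓ n hp hq hℓ hℓ2 hℓp hn hnp hnℓ γ τ hτ hdvd hv a ha hdig
end
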